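/- The variety V_3 of bands defined by y·x = y·x·y is not fluid: for the hypersubstitution σ(x·y) = x, the derived variety σ(V_3) is the variety of left-zero semigroups, which is a proper subvariety of V_3. -/

import Mathlib

/-- A similarity type: operation symbols with arities. -/
structure Signature where
  I : Type
  arity : I → ℕ

/-- Terms of a signature over a variable type. -/
inductive Term (sig : Signature) (V : Type) : Type
  | var : V → Term sig V
  | app : (i : sig.I) → (Fin (sig.arity i) → Term sig V) → Term sig V

/-- Substitution of terms for variables. -/
def Term.bind {sig : Signature} {V W : Type} : Term sig V → (V → Term sig W) → Term sig W
  | .var v, f => f v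
  | .app i ts, f => .app i (fun k => (ts k).bind f)

/-- An algebra of a signature (with nonempty carrier). -/
structure Alg (sig : Signature) where
  carrier : Type
  interp : (i : sig.I) → (Fin (sig.arity i) → carrier) → carrier
  nonempty : Nonempty carrier

/-- Evaluation of a term in an algebra under an assignment. -/
def Alg.eval {sig : Signature} {V : Type} (A : Alg sig) (v : V → A.carrier) :
    Term sig V → A.carrier
  | .var x => v x
  | .app i ts => A.interp i (fun k => A.eval v (ts k))

/-- A hypersubstitution assigns to each operation symbol a term of the same arity. -/
abbrev Hyp (sig : Signature) := (i : sig.I) → Term sig (Fin (sig.arity i))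

/-- The extension of a hypersubstitution to all terms. -/
def hypApply {sig : Signature} {V : Type} (σ : Hyp sig) : Term sig V → Term sig V
  | .var x => .var x
  | .app i ts => (σ i).bind (fun k => hypApply σ (ts k))

/-- The derived algebra `A_σ`. -/
def derive {sig : Signature} (σ : Hyp sig) (A : Alg sig) : Alg sig :=
  ⟨A.carrier, fun i args => A.eval args (σ i), A.nonempty⟩

/-- An identity `p = q` holds in an algebra. -/
def Satisfies {sig : Signature} (A : Alg sig) (e : Term sig ℕ × Term sig ℕ) : Prop :=
  ∀ v : ℕ → A.carrier, A.eval v e.1 = A.eval v e.2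

/-- Models of a set of identities. -/
def Models {sig : Signature} (E : Set (Term sig ℕ × Term sig ℕ)) : Set (Alg sig) :=
  {A | ∀ e ∈ E, Satisfies A e}

/-- Equational theory of a class of algebras. -/
def Th {sig : Signature} (K : Set (Alg sig)) : Set (Term sig ℕ × Term sig ℕ) :=
  {e | ∀ A ∈ K, Satisfies A e}

/-- The variety generated by a class. -/
def varGen {sig : Signature} (K : Set (Alg sig)) : Set (Alg sig) := Models (Th K)

/-- A class is a variety iff it is an equational class. -/
def IsVariety {sig : Signature} (V : Set (Alg sig)) : Prop := ∃ E, V = Models E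

/-- The derived variety `V_σ`. -/
def derivedVariety {sig : Signature} (V : Set (Alg sig)) (σ : Hyp sig) : Set (Alg sig) :=
  varGen {B | ∃ A ∈ V, B = derive σ A}

/-- A class is trivial if all its algebras are one-element. -/
def TrivialVar {sig : Signature} (V : Set (Alg sig)) : Prop :=
  ∀ A ∈ V, Subsingleton A.carrier

/-- A variety is fluid if it contains no proper derived variety. -/
def Fluid {sig : Signature} (V : Set (Alg sig)) : Prop :=
  ∀ σ : Hyp sig, derivedVariety V σ ⊆ V → derivedVariety V σ = V

/-- The signature with one binary operation symbol. -/
def sig2 : Signature := ⟨Unit, fun _ => 2⟩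

/-- The binary operation of a `sig2`-algebra. -/
def bop (A : Alg sig2) (x y : A.carrier) : A.carrier := A.interp () ![x, y]

/-- The hypersubstitution sending `x·y` to the first projection `x`. -/
def proj1 : Hyp sig2 := fun _ => Term.var ⟨0, by simp [sig2]⟩

/-- The variety of bands (idempotent semigroups). -/
def Bands : Set (Alg sig2) :=
  {A | (∀ x y z, bop A (bop A x y) z = bop A x (bop A y z)) ∧ (∀ x, bop A x x = x)}

/-- The variety of left-zero semigroups. -/
def LeftZero : Set (Alg sig2) := {A | ∀ x y, bop A x y = x}

/-- The variety V₃ of bands defined by y·x = y·x·y. -/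
def V3 : Set (Alg sig2) :=
  {A | A ∈ Bands ∧ ∀ y x, bop A y x = bop A (bop A y x) y}

/-!
Every algebra derived under `σ(x·y) = x` satisfies `x·y = x`, and a left-zero semigroup is its
own derived algebra, so `σ(V₃)` is exactly the variety of left-zero semigroups. It is a proper
subvariety of `V₃` because the two-element semilattice lies in `V₃` but is not left-zero.
-/

def leftZeroLaw : Term sig2 ℕ × Term sig2 ℕ :=
  (Term.app () ![Term.var 0, Term.var 1], Term.var 0)

theorem subset_varGen {sig : Signature} (K : Set (Alg sig)) : K ⊆ varGen K :=
  fun A hA _ he => he A hA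

theorem not_fluid_of_derivedVariety_ssubset {sig : Signature} {V : Set (Alg sig)} {σ : Hyp sig}
    (h : derivedVariety V σ ⊂ V) : ¬ Fluid V :=
  fun hV => h.ne (hV σ h.subset)

theorem eval_leftZeroLaw_fst (B : Alg sig2) (v : ℕ → B.carrier) :
    B.eval v leftZeroLaw.1 = bop B (v 0) (v 1) := by
  have hargs : (fun k => B.eval v (![Term.var 0, Term.var 1] k)) = ![v 0, v 1] := by
    funext k; fin_cases k <;> rfl
  exact congrArg (B.interp ()) hargs

theorem mem_leftZero_iff_satisfies (B : Alg sig2) : B ∈ LeftZero ↔ Satisfies B leftZeroLaw := by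
  constructor
  · intro hB v
    exact (eval_leftZeroLaw_fst B v).trans (hB (v 0) (v 1))
  · intro hB x y
    exact (eval_leftZeroLaw_fst B _).symm.trans (hB fun n => if n = 0 then x else y)

theorem interp_eq_of_mem_leftZero {B : Alg sig2} (hB : B ∈ LeftZero) (args : Fin 2 → B.carrier) :
    B.interp () args = args 0 := by
  have hargs : ![args 0, args 1] = args := by
    funext k; fin_cases k <;> rfl
  simpa only [bop, hargs] using hB (args 0) (args 1)

theorem derive_proj1_mem_leftZero (A : Alg sig2) : derive proj1 A ∈ LeftZero :=
  fun _ _ => rfl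

theorem derive_proj1_eq_of_mem_leftZero {B : Alg sig2} (hB : B ∈ LeftZero) :
    derive proj1 B = B := by
  obtain ⟨carrier, interp, nonempty⟩ := B
  simp only [derive, Alg.mk.injEq, heq_eq_eq, true_and]
  funext i args
  exact (interp_eq_of_mem_leftZero hB args).symm

theorem derivedVariety_proj1_subset_leftZero (V : Set (Alg sig2)) :
    derivedVariety V proj1 ⊆ LeftZero := by
  intro B hB
  rw [mem_leftZero_iff_satisfies]
  refine hB leftZeroLaw ?_
  rintro _ ⟨A, -, rfl⟩
  exact (mem_leftZero_iff_satisfies _).mp (derive_proj1_mem_leftZero A)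

theorem leftZero_subset_derivedVariety_proj1 {V : Set (Alg sig2)} (hV : LeftZero ⊆ V) :
    LeftZero ⊆ derivedVariety V proj1 :=
  fun B hB => subset_varGen _ ⟨B, hV hB, (derive_proj1_eq_of_mem_leftZero hB).symm⟩

theorem derivedVariety_proj1_eq_leftZero {V : Set (Alg sig2)} (hV : LeftZero ⊆ V) :
    derivedVariety V proj1 = LeftZero :=
  (derivedVariety_proj1_subset_leftZero V).antisymm (leftZero_subset_derivedVariety_proj1 hV)

theorem leftZero_subset_V3 : LeftZero ⊆ V3 := by
  intro B hB
  refine ⟨⟨fun x y z => ?_, fun x => hB x x⟩, fun y x => ?_⟩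
  · rw [hB, hB, hB]
  · rw [hB, hB]

def boolAnd : Alg sig2 :=
  ⟨Bool, fun _ args => args ⟨0, Nat.zero_lt_two⟩ && args ⟨1, Nat.one_lt_two⟩, ⟨true⟩⟩

theorem bop_boolAnd (x y : Bool) : bop boolAnd x y = (x && y) := rfl

theorem boolAnd_mem_V3 : boolAnd ∈ V3 := by
  refine ⟨⟨Bool.and_assoc, Bool.and_self⟩, ?_⟩
  show ∀ y x : Bool, (y && x) = (y && x && y)
  decide

theorem boolAnd_not_mem_leftZero : boolAnd ∉ LeftZero :=
  fun h => Bool.false_ne_true ((bop_boolAnd true false).symm.trans (h true false))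

theorem leftZero_ssubset_V3 : LeftZero ⊂ V3 :=
  ⟨leftZero_subset_V3, fun h => boolAnd_not_mem_leftZero (h boolAnd_mem_V3)⟩

/-- V₃ is not fluid: under σ(x·y) = x, the derived variety is the
variety of left-zero semigroups, a proper subvariety of V₃. -/
theorem V3_not_fluid :
    derivedVariety V3 proj1 = LeftZero ∧ LeftZero ⊂ V3 ∧ ¬ Fluid V3 := by
  have hderived := derivedVariety_proj1_eq_leftZero leftZero_subset_V3
  exact ⟨hderived, leftZero_ssubset_V3,
    not_fluid_of_derivedVariety_ssubset (σ := proj1) (hderived ▸ leftZero_ssubset_V3)⟩
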